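/- Let n ≥ 1, 1 ≤ p < ∞, let μ be a Borel probability measure on ℝ^n with finite p-th moment, and let ω, ω' ∈ ℝ^n. Then MK_p^{ℝ}(R^ω_♯ μ, R^{ω'}_♯ μ) ≤ |ω − ω'| · (∫_{ℝ^n} |x|^p dμ(x))^{1/p}, where |·| denotes the Euclidean norm. -/

import Mathlib

open MeasureTheory Real Set
open scoped ENNReal NNReal

noncomputable section

/-- `γ` is a coupling of `μ` and `ν`. -/
def IsCoupling {X : Type*} [MeasurableSpace X] (γ : Measure (X × X)) (μ ν : Measure X) : Prop :=
  IsProbabilityMeasure γ ∧ γ.map Prod.fst = μ ∧ γ.map Prod.snd = ν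

/-- The `p`-Monge–Kantorovich distance with respect to a distance function `d`. -/
def MKd {X : Type*} [MeasurableSpace X] (d : X → X → ℝ) (p : ℝ) (μ ν : Measure X) : ℝ :=
  (⨅ γ : {γ : Measure (X × X) // IsCoupling γ μ ν},
    ∫⁻ z, ENNReal.ofReal (d z.1 z.2 ^ p) ∂(γ : Measure (X × X))).toReal ^ (1 / p)

/-- The `p`-Monge–Kantorovich distance on `ℝ` (with the usual distance). -/
def MK1 (p : ℝ) (μ ν : Measure ℝ) : ℝ := MKd (fun a b : ℝ => |a - b|) p μ ν

/-- Projection `R^ω(x) = ⟨x, ω⟩` for `ω ∈ ℝ^n`. -/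
def RprojE {n : ℕ} (ω x : EuclideanSpace ℝ (Fin n)) : ℝ := inner ℝ x ω

lemma RprojE_measurable {n : ℕ} (ω : EuclideanSpace ℝ (Fin n)) :
    Measurable (RprojE ω) :=
  (continuous_id.inner continuous_const).measurable

/-- The Monge–Kantorovich distance between the projections of a measure `μ` in two directions
`ω, ω'` is bounded by `|ω - ω'|` times the `1/p`-power of the `p`-th moment of `μ`. -/
theorem MK_projection_lipschitz (n : ℕ) (hn : 1 ≤ n) (p : ℝ) (hp : 1 ≤ p)
    (μ : Measure (EuclideanSpace ℝ (Fin n))) [IsProbabilityMeasure μ]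
    (hμ : Integrable (fun x => ‖x‖ ^ p) μ) (ω ω' : EuclideanSpace ℝ (Fin n)) :
    MK1 p (μ.map (RprojE ω)) (μ.map (RprojE ω')) ≤
      ‖ω - ω'‖ * (∫ x, ‖x‖ ^ p ∂μ) ^ (1 / p) := by
  have hp0 : (0:ℝ) < p := lt_of_lt_of_le one_pos hp
  set f := RprojE ω with hfdef
  set g := RprojE ω' with hgdef
  have hf : Measurable f := RprojE_measurable ω
  have hg : Measurable g := RprojE_measurable ω'
  have hT : Measurable (fun x => (f x, g x)) := hf.prodMk hg
  set γ : Measure (ℝ × ℝ) := μ.map (fun x => (f x, g x)) with hγdef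
  have hcoupling : IsCoupling γ (μ.map f) (μ.map g) := by
    refine ⟨Measure.isProbabilityMeasure_map hT.aemeasurable, ?_, ?_⟩
    · rw [hγdef, Measure.map_map measurable_fst hT]; rfl
    · rw [hγdef, Measure.map_map measurable_snd hT]; rfl
  set C : ℝ≥0∞ := ENNReal.ofReal (‖ω - ω'‖ ^ p) * ENNReal.ofReal (∫ x, ‖x‖ ^ p ∂μ)
    with hCdef
  have hCtop : C ≠ ⊤ := ENNReal.mul_ne_top ENNReal.ofReal_ne_top ENNReal.ofReal_ne_top
  have hmeas : Measurable (fun z : ℝ × ℝ => ENNReal.ofReal (|z.1 - z.2| ^ p)) :=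
    ENNReal.measurable_ofReal.comp ((((measurable_fst.sub measurable_snd).abs).comp measurable_id |> fun h => (Real.continuous_rpow_const (le_of_lt (lt_of_lt_of_le one_pos hp))).measurable.comp h))
  have hIle : (∫⁻ z, ENNReal.ofReal (|z.1 - z.2| ^ p) ∂γ) ≤ C := by
    rw [hγdef, lintegral_map hmeas hT]
    have hbound : ∀ x, ENNReal.ofReal (|f x - g x| ^ p)
        ≤ ENNReal.ofReal (‖ω - ω'‖ ^ p) * ENNReal.ofReal (‖x‖ ^ p) := by
      intro x
      rw [← ENNReal.ofReal_mul (by positivity)]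
      apply ENNReal.ofReal_le_ofReal
      rw [← Real.mul_rpow (by positivity) (by positivity)]
      apply Real.rpow_le_rpow (abs_nonneg _) _ hp0.le
      have : f x - g x = inner ℝ x (ω - ω') := by
        simp [hfdef, hgdef, RprojE, inner_sub_right]
      rw [this, mul_comm]
      exact abs_real_inner_le_norm x (ω - ω')
    calc ∫⁻ x, ENNReal.ofReal (|f x - g x| ^ p) ∂μ
        ≤ ∫⁻ x, ENNReal.ofReal (‖ω - ω'‖ ^ p) * ENNReal.ofReal (‖x‖ ^ p) ∂μ :=
          lintegral_mono hbound
      _ = ENNReal.ofReal (‖ω - ω'‖ ^ p) * ∫⁻ x, ENNReal.ofReal (‖x‖ ^ p) ∂μ :=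
          lintegral_const_mul _ (ENNReal.measurable_ofReal.comp
            ((Real.continuous_rpow_const (le_of_lt (lt_of_lt_of_le one_pos hp))).measurable.comp measurable_norm))
      _ = C := by
          rw [hCdef, ← ofReal_integral_eq_lintegral_ofReal hμ
            (Filter.Eventually.of_forall fun x => by positivity)]
  have hinf : (⨅ γ' : {γ' : Measure (ℝ × ℝ) // IsCoupling γ' (μ.map f) (μ.map g)},
      ∫⁻ z, ENNReal.ofReal (|z.1 - z.2| ^ p) ∂(γ' : Measure (ℝ × ℝ))) ≤ C :=
    le_trans (iInf_le _ ⟨γ, hcoupling⟩) hIle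
  have hMK : MK1 p (μ.map f) (μ.map g) ≤ C.toReal ^ (1 / p) := by
    unfold MK1 MKd
    apply Real.rpow_le_rpow ENNReal.toReal_nonneg _ (by positivity)
    exact ENNReal.toReal_mono hCtop hinf
  refine hMK.trans_eq ?_
  have hint : (0:ℝ) ≤ ∫ x, ‖x‖ ^ p ∂μ :=
    integral_nonneg fun x => by positivity
  rw [hCdef, ENNReal.toReal_mul, ENNReal.toReal_ofReal (by positivity),
    ENNReal.toReal_ofReal hint, Real.mul_rpow (by positivity) hint,
    one_div, Real.rpow_rpow_inv (norm_nonneg _) hp0.ne']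


end
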